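/- arXiv:1701.03477 — 3 statements merged into one kernel-verified Lean document; each statement's English description precedes it below -/
import Mathlib

section
/- Let M be a symmetric positive definite n×n real matrix and K a symmetric positive semi-definite n×n real matrix, and let δ_1, ..., δ_K > 0. Define the block lower bidiagonal matrix A of size Kn×Kn with diagonal blocks M + δ_k K (k = 1,...,K) and subdiagonal blocks -M. Then for every vector u = (u_1,...,u_K), u^T A u = (1/2) u_K^T M u_K + Σ_{k=1}^K [ (1/2)(u_k - u_{k-1})^T M (u_k - u_{k-1}) + δ_k u_k^T K u_k ] with the convention u_0 = 0; in particular A is positive definite (u^T A u > 0 for all u ≠ 0). -/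
open Matrix

private lemma telescope' (f : ℕ → ℝ) (h0 : f 0 = 0) (Kt : ℕ) :
    ∑ k ∈ Finset.Icc 1 Kt, (f k - f (k - 1)) = f Kt := by
  induction Kt with
  | zero => simp [h0]
  | succ m ih =>
    rw [Finset.sum_Icc_succ_top (by omega : 1 ≤ m + 1), ih]
    simp

/-- Energy identity and positive definiteness for the Backward-Euler
block lower bidiagonal matrix with diagonal blocks `M + δ_k K` and
subdiagonal blocks `-M`, zero initial condition `u 0 = 0`. -/
theorem stmt_2 (n Kt : ℕ) (M Kmat : Matrix (Fin n) (Fin n) ℝ)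
    (hM : M.PosDef) (hK : Kmat.PosSemidef) (δ : ℕ → ℝ)
    (hδ : ∀ k ∈ Finset.Icc 1 Kt, 0 < δ k) :
    ∀ u : ℕ → Fin n → ℝ, u 0 = 0 →
      (∑ k ∈ Finset.Icc 1 Kt,
          u k ⬝ᵥ ((M + δ k • Kmat) *ᵥ u k - M *ᵥ u (k - 1)) =
        (1 / 2) * (u Kt ⬝ᵥ M *ᵥ u Kt) +
          ∑ k ∈ Finset.Icc 1 Kt,
            ((1 / 2) * ((u k - u (k - 1)) ⬝ᵥ M *ᵥ (u k - u (k - 1))) +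
              δ k * (u k ⬝ᵥ Kmat *ᵥ u k))) ∧
      ((∃ k ∈ Finset.Icc 1 Kt, u k ≠ 0) →
        0 < ∑ k ∈ Finset.Icc 1 Kt,
              u k ⬝ᵥ ((M + δ k • Kmat) *ᵥ u k - M *ᵥ u (k - 1))) := by
  intro u hu0
  -- real quadratic form facts
  have hMnn : ∀ x : Fin n → ℝ, 0 ≤ x ⬝ᵥ M *ᵥ x := by
    intro x
    have := hM.posSemidef.re_dotProduct_nonneg x
    simpa using this
  have hMpos : ∀ x : Fin n → ℝ, x ≠ 0 → 0 < x ⬝ᵥ M *ᵥ x := by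
    intro x hx
    have := hM.re_dotProduct_pos hx
    simpa using this
  have hKnn : ∀ x : Fin n → ℝ, 0 ≤ x ⬝ᵥ Kmat *ᵥ x := by
    intro x
    have := hK.re_dotProduct_nonneg x
    simpa using this
  have hsym : ∀ x y : Fin n → ℝ, x ⬝ᵥ M *ᵥ y = y ⬝ᵥ M *ᵥ x := by
    intro x y
    have hMs : Mᵀ = M := by
      have := hM.isHermitian
      exact (Matrix.conjTranspose_eq_transpose_of_trivial M).symm.trans this
    rw [dotProduct_mulVec, ← mulVec_transpose, hMs, dotProduct_comm]
  -- termwise identity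
  have hterm : ∀ k, u k ⬝ᵥ ((M + δ k • Kmat) *ᵥ u k - M *ᵥ u (k - 1)) =
      ((1/2) * (u k ⬝ᵥ M *ᵥ u k) - (1/2) * (u (k-1) ⬝ᵥ M *ᵥ u (k-1))) +
      ((1/2) * ((u k - u (k-1)) ⬝ᵥ M *ᵥ (u k - u (k-1))) + δ k * (u k ⬝ᵥ Kmat *ᵥ u k)) := by
    intro k
    have hexp : (u k - u (k-1)) ⬝ᵥ M *ᵥ (u k - u (k-1)) =
        u k ⬝ᵥ M *ᵥ u k - 2 * (u k ⬝ᵥ M *ᵥ u (k-1)) + u (k-1) ⬝ᵥ M *ᵥ u (k-1) := by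
      rw [mulVec_sub, dotProduct_sub, sub_dotProduct, sub_dotProduct,
        hsym (u (k-1)) (u k)]
      ring
    rw [add_mulVec, smul_mulVec, dotProduct_sub, dotProduct_add,
      dotProduct_smul, hexp]
    simp only [smul_eq_mul]
    ring
  have heq : ∑ k ∈ Finset.Icc 1 Kt,
      u k ⬝ᵥ ((M + δ k • Kmat) *ᵥ u k - M *ᵥ u (k - 1)) =
      (1 / 2) * (u Kt ⬝ᵥ M *ᵥ u Kt) +
        ∑ k ∈ Finset.Icc 1 Kt,
          ((1 / 2) * ((u k - u (k - 1)) ⬝ᵥ M *ᵥ (u k - u (k - 1))) +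
            δ k * (u k ⬝ᵥ Kmat *ᵥ u k)) := by
    calc ∑ k ∈ Finset.Icc 1 Kt, u k ⬝ᵥ ((M + δ k • Kmat) *ᵥ u k - M *ᵥ u (k - 1))
        = ∑ k ∈ Finset.Icc 1 Kt, (((1/2) * (u k ⬝ᵥ M *ᵥ u k) - (1/2) * (u (k-1) ⬝ᵥ M *ᵥ u (k-1))) +
            ((1/2) * ((u k - u (k-1)) ⬝ᵥ M *ᵥ (u k - u (k-1))) + δ k * (u k ⬝ᵥ Kmat *ᵥ u k))) := by
          exact Finset.sum_congr rfl fun k _ => hterm k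
      _ = (∑ k ∈ Finset.Icc 1 Kt, ((1/2) * (u k ⬝ᵥ M *ᵥ u k) - (1/2) * (u (k-1) ⬝ᵥ M *ᵥ u (k-1)))) +
          ∑ k ∈ Finset.Icc 1 Kt, ((1/2) * ((u k - u (k-1)) ⬝ᵥ M *ᵥ (u k - u (k-1))) + δ k * (u k ⬝ᵥ Kmat *ᵥ u k)) := by
          rw [Finset.sum_add_distrib]
      _ = _ := by
          rw [telescope' (fun k => (1/2) * (u k ⬝ᵥ M *ᵥ u k)) (by simp [hu0]) Kt]
  refine ⟨heq, ?_⟩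
  rintro ⟨k0, hk0mem, hk0⟩
  rw [heq]
  -- find minimal index with u k ≠ 0; then u k - u (k-1) ≠ 0 at that index
  have hmain : ∃ j ∈ Finset.Icc 1 Kt, u j - u (j-1) ≠ 0 := by
    by_contra h
    push_neg at h
    have hzero : ∀ j ≤ Kt, u j = 0 := by
      intro j hj
      induction j with
      | zero => exact hu0
      | succ m ih =>
        have h1 : u (m+1) - u m = 0 := by
          have := h (m+1) (Finset.mem_Icc.mpr ⟨by omega, hj⟩)
          simpa using this
        have := ih (by omega)
        have : u (m+1) = u m := by
          have := sub_eq_zero.mp h1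
          exact this
        rw [this, ih (by omega)]
    exact hk0 (hzero k0 (Finset.mem_Icc.mp hk0mem).2)
  obtain ⟨j, hjmem, hj⟩ := hmain
  have hpos : 0 < ∑ k ∈ Finset.Icc 1 Kt,
      ((1/2) * ((u k - u (k-1)) ⬝ᵥ M *ᵥ (u k - u (k-1))) + δ k * (u k ⬝ᵥ Kmat *ᵥ u k)) := by
    apply Finset.sum_pos'
    · intro k hk
      have h1 := hMnn (u k - u (k-1))
      have h2 := hKnn (u k)
      have h3 := (hδ k hk).le
      nlinarith
    · refine ⟨j, hjmem, ?_⟩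
      have h1 := hMpos _ hj
      have h2 := hKnn (u j)
      have h3 := (hδ j hjmem).le
      nlinarith
  have h0 := hMnn (u Kt)
  linarith
end

section
/- Let M be symmetric positive definite and K symmetric positive semi-definite n×n real matrices, δ_k > 0 for k = 1,...,K. Consider the perturbed subdomain operator A_n on (ℝⁿ)^{K+1} defined for an interior time subdomain by uᵀ A_n u = Σ_{k=1}^{K} [ (u_k - u_{k-1})ᵀ M u_k + δ_k u_kᵀ K u_k ] + (1/2) u_0ᵀ M u_0 - (1/2) u_Kᵀ M u_K. Then uᵀ A_n u = (1/2) Σ_{k=1}^{K} (u_k - u_{k-1})ᵀ M (u_k - u_{k-1}) + Σ_{k=1}^{K} δ_k u_kᵀ K u_k ≥ 0 for all u = (u_0, ..., u_K). -/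
open Matrix

lemma aux_key {n : ℕ} (M : Matrix (Fin n) (Fin n) ℝ) (hM : M.IsSymm)
    (a b : Fin n → ℝ) :
    (a - b) ⬝ᵥ M *ᵥ a =
      (1/2) * (a ⬝ᵥ M *ᵥ a) - (1/2) * (b ⬝ᵥ M *ᵥ b)
        + (1/2) * ((a - b) ⬝ᵥ M *ᵥ (a - b)) := by
  have hsym : b ⬝ᵥ M *ᵥ a = a ⬝ᵥ M *ᵥ b := by
    conv_lhs => rw [dotProduct_mulVec, ← hM, vecMul_transpose, dotProduct_comm]
  simp only [sub_dotProduct, mulVec_sub, dotProduct_sub, hsym]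
  ring

/-- Local energy identity for the perturbed sub-assembled space-time
operator on an interior time subdomain: the quadratic form equals a sum
of nonnegative terms, hence is nonnegative. -/
theorem stmt_12 (n Kt : ℕ) (M Kmat : Matrix (Fin n) (Fin n) ℝ)
    (hM : M.PosDef) (hK : Kmat.PosSemidef) (δ : ℕ → ℝ)
    (hδ : ∀ k ∈ Finset.Icc 1 Kt, 0 < δ k) (u : ℕ → Fin n → ℝ) :
    (∑ k ∈ Finset.Icc 1 Kt,
        ((u k - u (k - 1)) ⬝ᵥ M *ᵥ u k + δ k * (u k ⬝ᵥ Kmat *ᵥ u k)) +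
        (1 / 2) * (u 0 ⬝ᵥ M *ᵥ u 0) - (1 / 2) * (u Kt ⬝ᵥ M *ᵥ u Kt) =
      (1 / 2) * ∑ k ∈ Finset.Icc 1 Kt,
          (u k - u (k - 1)) ⬝ᵥ M *ᵥ (u k - u (k - 1)) +
        ∑ k ∈ Finset.Icc 1 Kt, δ k * (u k ⬝ᵥ Kmat *ᵥ u k)) ∧
    0 ≤ ∑ k ∈ Finset.Icc 1 Kt,
          ((u k - u (k - 1)) ⬝ᵥ M *ᵥ u k + δ k * (u k ⬝ᵥ Kmat *ᵥ u k)) +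
        (1 / 2) * (u 0 ⬝ᵥ M *ᵥ u 0) - (1 / 2) * (u Kt ⬝ᵥ M *ᵥ u Kt) := by
  have hMsymm : M.IsSymm := by
    have := hM.1
    rwa [Matrix.IsHermitian, conjTranspose_eq_transpose_of_trivial] at this
  have key : ∀ k, (u k - u (k-1)) ⬝ᵥ M *ᵥ u k =
      (1/2) * (u k ⬝ᵥ M *ᵥ u k) - (1/2) * (u (k-1) ⬝ᵥ M *ᵥ u (k-1))
        + (1/2) * ((u k - u (k-1)) ⬝ᵥ M *ᵥ (u k - u (k-1))) :=
    fun k => aux_key M hMsymm _ _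
  have tel : ∑ k ∈ Finset.Icc 1 Kt,
      ((1/2) * (u k ⬝ᵥ M *ᵥ u k) - (1/2) * (u (k-1) ⬝ᵥ M *ᵥ u (k-1)))
      = (1/2) * (u Kt ⬝ᵥ M *ᵥ u Kt) - (1/2) * (u 0 ⬝ᵥ M *ᵥ u 0) := by
    clear hδ
    induction Kt with
    | zero => simp
    | succ m ih =>
      rw [Finset.sum_Icc_succ_top (by omega), ih]
      simp
  have eq1 : (∑ k ∈ Finset.Icc 1 Kt,
        ((u k - u (k - 1)) ⬝ᵥ M *ᵥ u k + δ k * (u k ⬝ᵥ Kmat *ᵥ u k)) +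
        (1 / 2) * (u 0 ⬝ᵥ M *ᵥ u 0) - (1 / 2) * (u Kt ⬝ᵥ M *ᵥ u Kt) =
      (1 / 2) * ∑ k ∈ Finset.Icc 1 Kt,
          (u k - u (k - 1)) ⬝ᵥ M *ᵥ (u k - u (k - 1)) +
        ∑ k ∈ Finset.Icc 1 Kt, δ k * (u k ⬝ᵥ Kmat *ᵥ u k)) := by
    simp only [key]
    rw [Finset.sum_add_distrib, Finset.sum_add_distrib, tel, Finset.mul_sum]
    ring
  refine ⟨eq1, ?_⟩
  rw [eq1]
  have h1 : 0 ≤ ∑ k ∈ Finset.Icc 1 Kt,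
      (u k - u (k - 1)) ⬝ᵥ M *ᵥ (u k - u (k - 1)) := by
    apply Finset.sum_nonneg
    intro k _
    have := hM.posSemidef.dotProduct_mulVec_nonneg (u k - u (k-1))
    simpa using this
  have h2 : 0 ≤ ∑ k ∈ Finset.Icc 1 Kt, δ k * (u k ⬝ᵥ Kmat *ᵥ u k) := by
    apply Finset.sum_nonneg
    intro k hk
    have := hK.dotProduct_mulVec_nonneg (u k)
    exact mul_nonneg (hδ k hk).le (by simpa using this)
  positivity
end

section
/- Consider the Backward-Euler matrix A on (ℝⁿ)^K with diagonal blocks M + δK and subdiagonal blocks -M (M SPD, K symmetric PSD, δ > 0, zero initial condition). Then the symmetric part (A + Aᵀ)/2 is positive definite. -/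
open Matrix Finset

private lemma dot_symm' {n : ℕ} {M : Matrix (Fin n) (Fin n) ℝ} (hM : Mᵀ = M)
    (u v : Fin n → ℝ) : u ⬝ᵥ M *ᵥ v = v ⬝ᵥ M *ᵥ u := by
  rw [dotProduct_mulVec, dotProduct_comm, ← mulVec_transpose, hM]

private lemma dot_sub_sub' {n : ℕ} (M : Matrix (Fin n) (Fin n) ℝ)
    (u v : Fin n → ℝ) : (u - v) ⬝ᵥ M *ᵥ (u - v) =
      u ⬝ᵥ M *ᵥ u - u ⬝ᵥ M *ᵥ v - v ⬝ᵥ M *ᵥ u + v ⬝ᵥ M *ᵥ v := by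
  simp [sub_dotProduct, dotProduct_sub, mulVec_sub]
  ring

private lemma energy' {n : ℕ} {M : Matrix (Fin n) (Fin n) ℝ} (hM : Mᵀ = M)
    (g : ℕ → Fin n → ℝ) (hg0 : g 0 = 0) (N : ℕ) :
    ∑ k ∈ range N, (g (k+1) ⬝ᵥ M *ᵥ g (k+1) - g (k+1) ⬝ᵥ M *ᵥ g k)
      = (1/2) * (g N ⬝ᵥ M *ᵥ g N)
        + ∑ k ∈ range N, (1/2) * ((g (k+1) - g k) ⬝ᵥ M *ᵥ (g (k+1) - g k)) := by
  induction N with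
  | zero => simp [hg0]
  | succ N ih =>
      rw [Finset.sum_range_succ, ih, Finset.sum_range_succ]
      have h1 := dot_sub_sub' M (g (N+1)) (g N)
      have h2 := dot_symm' hM (g (N+1)) (g N)
      linarith

/-- The symmetric part of the Backward-Euler space-time block matrix
(diagonal blocks `M + δK`, subdiagonal blocks `-M`) is positive
definite. -/
theorem stmt_15 (n Kt : ℕ) (M Kmat : Matrix (Fin n) (Fin n) ℝ)
    (hM : M.PosDef) (hK : Kmat.PosSemidef) (δ : ℝ) (hδ : 0 < δ)
    (A : Matrix (Fin Kt × Fin n) (Fin Kt × Fin n) ℝ)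
    (hA : ∀ k l : Fin Kt, ∀ i j : Fin n,
      A (k, i) (l, j) =
        if k = l then (M + δ • Kmat) i j
        else if (l : ℕ) + 1 = (k : ℕ) then -M i j else 0) :
    (((1 : ℝ) / 2) • (A + Aᵀ)).PosDef := by
  have hMsymm : Mᵀ = M := hM.1
  have hherm : (((1:ℝ)/2) • (A + Aᵀ)).IsHermitian := by
    unfold Matrix.IsHermitian
    ext p q
    simp [Matrix.conjTranspose_apply, Matrix.transpose_apply, Matrix.add_apply]
    ring
  refine posDef_iff_dotProduct_mulVec.mpr ⟨hherm, fun x hx => ?_⟩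
  have hstar : star x = x := by simp
  have hred : star x ⬝ᵥ (((1:ℝ)/2) • (A + Aᵀ)) *ᵥ x = x ⬝ᵥ A *ᵥ x := by
    rw [hstar]
    have h1 : x ⬝ᵥ Aᵀ *ᵥ x = x ⬝ᵥ A *ᵥ x := by
      rw [mulVec_transpose, dotProduct_comm, dotProduct_mulVec]
    rw [smul_mulVec, add_mulVec, dotProduct_smul]
    rw [dotProduct_add, h1]
    simp [smul_eq_mul]
    ring
  rw [hred]
  set f : Fin Kt → Fin n → ℝ := fun k i => x (k, i) with hf
  set g : ℕ → Fin n → ℝ := fun m => if h : 1 ≤ m ∧ m ≤ Kt then f ⟨m-1, by omega⟩ else 0 with hg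
  have hg0 : g 0 = 0 := by simp [hg]
  have hgf : ∀ k : Fin Kt, g ((k:ℕ) + 1) = f k := by
    intro k
    have hc : 1 ≤ (k:ℕ)+1 ∧ (k:ℕ)+1 ≤ Kt := ⟨Nat.le_add_left _ _, k.2⟩
    simp only [hg]
    rw [dif_pos hc]
    congr 1
  have keyblock : ∀ k l : Fin Kt, (∑ i, ∑ j, x (k,i) * (A (k,i) (l,j) * x (l,j)))
      = (if k = l then f k ⬝ᵥ (M + δ • Kmat) *ᵥ f l else 0)
        + (if (l:ℕ) + 1 = (k:ℕ) then -(f k ⬝ᵥ M *ᵥ f l) else 0) := by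
    intro k l
    by_cases hkl : k = l
    · have hne : ¬ ((l:ℕ)+1 = (k:ℕ)) := by subst hkl; omega
      rw [if_pos hkl, if_neg hne, add_zero]
      simp only [hA, if_pos hkl, dotProduct, mulVec, Finset.mul_sum, hf]
    · rw [if_neg hkl]
      by_cases hlk : (l:ℕ)+1 = (k:ℕ)
      · rw [if_pos hlk, zero_add]
        simp only [hA, if_neg hkl, if_pos hlk, dotProduct, mulVec, Finset.mul_sum, hf]
        rw [← Finset.sum_neg_distrib]
        refine Finset.sum_congr rfl fun i _ => ?_
        rw [← Finset.sum_neg_distrib]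
        exact Finset.sum_congr rfl fun j _ => by ring
      · rw [if_neg hlk, zero_add]
        simp [hA, hkl, hlk]
  have hsub : ∀ k : Fin Kt, (∑ l : Fin Kt, if (l:ℕ)+1 = (k:ℕ) then -(f k ⬝ᵥ M *ᵥ f l) else 0)
      = -(f k ⬝ᵥ M *ᵥ g (k:ℕ)) := by
    intro k
    by_cases hk : (k:ℕ) = 0
    · have hall : ∀ l : Fin Kt, ¬((l:ℕ)+1 = (k:ℕ)) := fun l => by omega
      rw [Finset.sum_eq_zero fun l _ => if_neg (hall l)]
      have hgk : g (k:ℕ) = 0 := by rw [hk, hg0]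
      simp [hgk]
    · have hklt := k.2
      rw [Finset.sum_eq_single (⟨(k:ℕ)-1, by omega⟩ : Fin Kt)]
      · have h1 : ((⟨(k:ℕ)-1, by omega⟩ : Fin Kt):ℕ) + 1 = (k:ℕ) := by simp; omega
        rw [if_pos h1]
        have h2 : g (k:ℕ) = f ⟨(k:ℕ)-1, by omega⟩ := by
          simp only [hg]
          rw [dif_pos ⟨by omega, by omega⟩]
        rw [h2]
      · intro l _ hne
        refine if_neg fun hc => hne (Fin.ext ?_)
        simp
        omega
      · exact fun h => absurd (Finset.mem_univ _) h
  have hquad : x ⬝ᵥ A *ᵥ x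
      = ∑ k : Fin Kt, (f k ⬝ᵥ (M + δ • Kmat) *ᵥ f k - f k ⬝ᵥ M *ᵥ g (k:ℕ)) := by
    have h1 : x ⬝ᵥ A *ᵥ x
        = ∑ k : Fin Kt, ∑ i, ∑ l : Fin Kt, ∑ j, x (k,i) * (A (k,i) (l,j) * x (l,j)) := by
      simp only [dotProduct, mulVec, Finset.mul_sum, Fintype.sum_prod_type]
    rw [h1]
    refine Finset.sum_congr rfl fun k _ => ?_
    rw [Finset.sum_comm]
    calc (∑ l : Fin Kt, ∑ i, ∑ j, x (k,i) * (A (k,i) (l,j) * x (l,j)))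
        = ∑ l : Fin Kt, ((if k = l then f k ⬝ᵥ (M + δ • Kmat) *ᵥ f l else 0)
            + (if (l:ℕ) + 1 = (k:ℕ) then -(f k ⬝ᵥ M *ᵥ f l) else 0)) :=
          Finset.sum_congr rfl fun l _ => keyblock k l
      _ = (∑ l : Fin Kt, if k = l then f k ⬝ᵥ (M + δ • Kmat) *ᵥ f l else 0)
            + ∑ l : Fin Kt, if (l:ℕ) + 1 = (k:ℕ) then -(f k ⬝ᵥ M *ᵥ f l) else 0 :=
          Finset.sum_add_distrib
      _ = f k ⬝ᵥ (M + δ • Kmat) *ᵥ f k - f k ⬝ᵥ M *ᵥ g (k:ℕ) := by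
          rw [hsub k, Finset.sum_ite_eq, if_pos (Finset.mem_univ k)]
          ring
  have hrange : x ⬝ᵥ A *ᵥ x
      = (∑ m ∈ range Kt, (g (m+1) ⬝ᵥ M *ᵥ g (m+1) - g (m+1) ⬝ᵥ M *ᵥ g m))
        + ∑ m ∈ range Kt, δ * (g (m+1) ⬝ᵥ Kmat *ᵥ g (m+1)) := by
    rw [hquad]
    have h2 : ∀ k : Fin Kt,
        f k ⬝ᵥ (M + δ • Kmat) *ᵥ f k - f k ⬝ᵥ M *ᵥ g (k:ℕ)
        = (fun m => (g (m+1) ⬝ᵥ M *ᵥ g (m+1) - g (m+1) ⬝ᵥ M *ᵥ g m)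
            + δ * (g (m+1) ⬝ᵥ Kmat *ᵥ g (m+1))) (k:ℕ) := by
      intro k
      simp only
      rw [hgf k, add_mulVec, smul_mulVec, dotProduct_add, dotProduct_smul, smul_eq_mul]
      ring
    rw [Finset.sum_congr rfl fun k _ => h2 k,
      Fin.sum_univ_eq_sum_range (fun m => g (m+1) ⬝ᵥ M *ᵥ g (m+1) - g (m+1) ⬝ᵥ M *ᵥ g m
        + δ * (g (m+1) ⬝ᵥ Kmat *ᵥ g (m+1))) Kt]
    exact Finset.sum_add_distrib
  have hMnn : ∀ u : Fin n → ℝ, 0 ≤ u ⬝ᵥ M *ᵥ u := fun u => by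
    have := hM.posSemidef.dotProduct_mulVec_nonneg u
    simpa using this
  have hKnn : ∀ u : Fin n → ℝ, 0 ≤ u ⬝ᵥ Kmat *ᵥ u := fun u => by
    have := hK.dotProduct_mulVec_nonneg u
    simpa using this
  have hMpos : ∀ u : Fin n → ℝ, u ≠ 0 → 0 < u ⬝ᵥ M *ᵥ u := fun u hu => by
    have := hM.dotProduct_mulVec_pos hu
    simpa using this
  have hex : ∃ m, g m ≠ 0 := by
    have hxp : ∃ p, x p ≠ 0 := by
      by_contra h
      push_neg at h
      exact hx (funext h)
    obtain ⟨⟨k, i⟩, hp⟩ := hxp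
    refine ⟨(k:ℕ)+1, fun h0 => hp ?_⟩
    have hfk : f k = 0 := by rw [← hgf k]; exact h0
    have := congrFun hfk i
    simpa [hf] using this
  set m0 := Nat.find hex with hm0def
  have hm0 : g m0 ≠ 0 := Nat.find_spec hex
  have hmin : ∀ m < m0, g m = 0 := fun m hm => by
    by_contra h
    exact Nat.find_min hex hm h
  have h1le : 1 ≤ m0 ∧ m0 ≤ Kt := by
    by_contra h
    apply hm0
    simp only [hg]
    rw [dif_neg h]
  have hk0 : m0 - 1 ∈ range Kt := by
    rw [Finset.mem_range]
    omega
  have hd : g (m0 - 1 + 1) - g (m0 - 1) = g m0 := by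
    have he : m0 - 1 + 1 = m0 := by omega
    rw [he, hmin (m0-1) (by omega), sub_zero]
  have hterm : 0 < (1/2:ℝ) * ((g (m0-1+1) - g (m0-1)) ⬝ᵥ M *ᵥ (g (m0-1+1) - g (m0-1))) := by
    rw [hd]
    exact mul_pos (by norm_num) (hMpos _ hm0)
  have hsum1 : 0 < ∑ m ∈ range Kt, (1/2:ℝ) * ((g (m+1) - g m) ⬝ᵥ M *ᵥ (g (m+1) - g m)) :=
    lt_of_lt_of_le hterm
      (Finset.single_le_sum
        (f := fun m => (1/2:ℝ) * ((g (m+1) - g m) ⬝ᵥ M *ᵥ (g (m+1) - g m)))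
        (fun m _ => mul_nonneg (by norm_num) (hMnn _)) hk0)
  have hsum2 : 0 ≤ ∑ m ∈ range Kt, δ * (g (m+1) ⬝ᵥ Kmat *ᵥ g (m+1)) :=
    Finset.sum_nonneg fun m _ => mul_nonneg hδ.le (hKnn _)
  have h3 : 0 ≤ (1/2:ℝ) * (g Kt ⬝ᵥ M *ᵥ g Kt) := mul_nonneg (by norm_num) (hMnn _)
  rw [hrange, energy' hMsymm g hg0 Kt]
  linarith
end
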